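/- arXiv:2506.11660 — 2 statements merged into one kernel-verified Lean document; each statement's English description precedes it below -/
import Mathlib

section
/- A student i is unimprovable if and only if i does not lie on any directed cycle of the envy digraph G^DA(P). -/
/-!
A school choice problem: finitely many students `I` and schools `S`
(with a distinguished null school of quota `|I|`).  Each student `i` has a
strict preference over schools represented by its rank function
`rk i : S → ℕ` (a bijection onto `{1, …, |S|}`, where rank 1 is the most
preferred school); each school `s` has a quota `quota s ≥ 1` and a strict
priority over students represented by `prio s : I → ℕ`
(`i ▷_s j` iff `prio s i < prio s j`).
-/
structure SchoolChoice (I S : Type) [Fintype I] [Fintype S]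
    [DecidableEq I] [DecidableEq S] where
  nullSchool : S
  quota : S → ℕ
  rk : I → S → ℕ
  prio : S → I → ℕ
  quota_pos : ∀ s : S, 1 ≤ quota s
  quota_null : quota nullSchool = Fintype.card I
  rk_inj : ∀ i : I, Function.Injective (rk i)
  rk_mem : ∀ (i : I) (s : S), rk i s ∈ Finset.Icc 1 (Fintype.card S)
  prio_inj : ∀ s : S, Function.Injective (prio s)

namespace SchoolChoice

open scoped Classical

variable {I S : Type} [Fintype I] [Fintype S] [DecidableEq I] [DecidableEq S]

/-- `μ` is a matching: no school is assigned more students than its quota. -/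
def IsMatching (P : SchoolChoice I S) (μ : I → S) : Prop :=
  ∀ s : S, (Finset.univ.filter fun i => μ i = s).card ≤ P.quota s

/-- Given the sets `R i` of schools that have rejected student `i` so far,
student `i` proposes to her most preferred school that has not rejected her. -/
noncomputable def propose (P : SchoolChoice I S) (R : I → Finset S) (i : I) : S :=
  if h : (Finset.univ \ R i).Nonempty then
    (Finset.exists_min_image (Finset.univ \ R i) (P.rk i) h).choose
  else P.nullSchool

/-- At the DA round with rejection state `R`, school `s` rejects student `i`:
`i` applies to `s` and at least `quota s` applicants to `s` have higher priority. -/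
def rejectsAt (P : SchoolChoice I S) (R : I → Finset S) (s : S) (i : I) : Prop :=
  P.propose R i = s ∧
    P.quota s ≤ (Finset.univ.filter fun j =>
      P.propose R j = s ∧ P.prio s j < P.prio s i).card

/-- One round of student-proposing Deferred Acceptance: record new rejections. -/
noncomputable def stepR (P : SchoolChoice I S) (R : I → Finset S) : I → Finset S :=
  fun i => R i ∪ (Finset.univ.filter fun s => P.rejectsAt R s i)

/-- Rejection state after `n` rounds of Deferred Acceptance. -/
noncomputable def daR (P : SchoolChoice I S) : ℕ → I → Finset S
  | 0 => fun _ => (∅ : Finset S)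
  | n + 1 => P.stepR (P.daR n)

/-- The outcome of the student-proposing Deferred Acceptance algorithm:
iterate rounds until no rejection occurs (which happens within
`|I|·|S| + 1` rounds); each student is matched to the school holding her. -/
noncomputable def DA (P : SchoolChoice I S) : I → S :=
  P.propose (P.daR (Fintype.card I * Fintype.card S + 1))

/-- A matching `ν` is stable-dominating if every student weakly prefers
`ν` to the DA outcome. -/
def StableDominating (P : SchoolChoice I S) (ν : I → S) : Prop :=
  P.IsMatching ν ∧ ∀ i : I, P.rk i (ν i) ≤ P.rk i (P.DA i)

/-- Student `i` is unimprovable: every stable-dominating matching assigns `i`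
to her DA school. -/
def Unimprovable (P : SchoolChoice I S) (i : I) : Prop :=
  ∀ ν : I → S, P.StableDominating ν → ν i = P.DA i

/-- Edge of the envy digraph `G^DA(P)`: `i` prefers `j`'s DA school to her own. -/
def Envy (P : SchoolChoice I S) (i j : I) : Prop :=
  P.rk i (P.DA j) < P.rk i (P.DA i)

/-- Student `i` lies on a directed cycle of the envy digraph `G^DA(P)`. -/
def OnCycle (P : SchoolChoice I S) (i : I) : Prop :=
  ∃ (m : ℕ) (c : ℕ → I), 0 < m ∧ c 0 = i ∧ c m = i ∧
    ∀ k < m, P.Envy (c k) (c (k + 1))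

/-- Student `i` desires school `s` in matching `μ`. -/
def Desires (P : SchoolChoice I S) (μ : I → S) (i : I) (s : S) : Prop :=
  P.rk i s < P.rk i (μ i)

/-- `μ` is non-wasteful: every desired school is filled to quota. -/
def NonWasteful (P : SchoolChoice I S) (μ : I → S) : Prop :=
  ∀ s : S, (∃ i : I, P.Desires μ i s) →
    (Finset.univ.filter fun i => μ i = s).card = P.quota s

/-- `μ` is stable: a non-wasteful matching with no priority violations. -/
def Stable (P : SchoolChoice I S) (μ : I → S) : Prop :=
  P.IsMatching μ ∧ P.NonWasteful μ ∧
    ¬ ∃ (i j : I) (s : S), P.Desires μ i s ∧ μ j = s ∧ P.prio s i < P.prio s j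

/-- `μ` Pareto-dominates `ν`. -/
def ParetoDominates (P : SchoolChoice I S) (μ ν : I → S) : Prop :=
  (∀ i : I, P.rk i (μ i) ≤ P.rk i (ν i)) ∧ ∃ i : I, P.rk i (μ i) < P.rk i (ν i)

/-- `μ` is a Pareto-efficient matching. -/
def ParetoEfficient (P : SchoolChoice I S) (μ : I → S) : Prop :=
  P.IsMatching μ ∧ ∀ ν : I → S, P.IsMatching ν → ¬ P.ParetoDominates ν μ

end SchoolChoice

namespace SchoolChoice

open scoped Classical
open Finset

variable {I S : Type} [Fintype I] [Fintype S] [DecidableEq I] [DecidableEq S]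

lemma countLemma (T : Finset I) (f : I → ℕ)
    (hf : Function.Injective f) (q : ℕ) :
    (T.filter fun j => (T.filter fun k => f k < f j).card < q).card = min q T.card := by
  set g : I → ℕ := fun j => (T.filter fun k => f k < f j).card with hg
  have hgmono : ∀ j ∈ T, ∀ j' ∈ T, f j < f j' → g j < g j' := by
    intro j hj j' _ hlt
    apply Finset.card_lt_card
    constructor
    · intro k hk; simp only [mem_filter] at hk ⊢; exact ⟨hk.1, hk.2.trans hlt⟩
    · intro hsub
      have : j ∈ T.filter fun k => f k < f j := hsub (by simp [hj, hlt])
      simp at this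
  have hginj : Set.InjOn g T := by
    intro a ha b hb hab
    by_contra hne
    rcases lt_or_gt_of_ne (fun h => hne (hf h) : f a ≠ f b) with h | h
    · exact absurd hab (Nat.ne_of_lt (hgmono a ha b hb h))
    · exact absurd hab.symm (Nat.ne_of_lt (hgmono b hb a ha h))
  have himg : T.image g = Finset.range T.card := by
    apply Finset.eq_of_subset_of_card_le
    · intro x hx
      simp only [mem_image] at hx
      rcases hx with ⟨j, hj, rfl⟩
      simp only [mem_range]
      calc g j ≤ (T.erase j).card := by
            apply Finset.card_le_card
            intro k hk; simp only [mem_filter] at hk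
            exact Finset.mem_erase.mpr ⟨fun h => absurd (h ▸ hk.2) (lt_irrefl _), hk.1⟩
        _ < T.card := Finset.card_erase_lt_of_mem hj
    · rw [Finset.card_image_of_injOn hginj, Finset.card_range]
  have h2 : (T.filter fun j => g j < q).card = ((T.image g).filter (· < q)).card := by
    rw [Finset.filter_image]
    exact (Finset.card_image_of_injOn (hginj.mono (Finset.filter_subset _ _))).symm
  rw [h2, himg]
  have h3 : (Finset.range T.card).filter (· < q) = Finset.range (min q T.card) := by
    ext x; simp [Nat.lt_min, and_comm]
  rw [h3, Finset.card_range]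

variable (P : SchoolChoice I S)

/-- the null school never rejects anyone -/
lemma not_rejects_null (R : I → Finset S) (i : I) : ¬ P.rejectsAt R P.nullSchool i := by
  rintro ⟨-, hcard⟩
  have hsub : (Finset.univ.filter fun j =>
      P.propose R j = P.nullSchool ∧ P.prio P.nullSchool j < P.prio P.nullSchool i)
      ⊆ Finset.univ.erase i := by
    intro j hj
    simp only [mem_filter] at hj
    exact Finset.mem_erase.mpr ⟨fun h => absurd (h ▸ hj.2.2) (lt_irrefl _), Finset.mem_univ _⟩
  have := (Finset.card_le_card hsub).trans_lt
      (Finset.card_erase_lt_of_mem (Finset.mem_univ i))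
  rw [Finset.card_univ, ← P.quota_null] at this
  exact absurd hcard (not_le.mpr this)

lemma null_not_daR (n : ℕ) (i : I) : P.nullSchool ∉ P.daR n i := by
  induction n with
  | zero => simp [daR]
  | succ n ih =>
    simp only [daR, stepR, Finset.mem_union, Finset.mem_filter]
    rintro (h | ⟨-, h⟩)
    · exact ih h
    · exact P.not_rejects_null _ i h

lemma propose_spec (R : I → Finset S) (i : I) (h : P.nullSchool ∉ R i) :
    P.propose R i ∉ R i ∧ ∀ s, s ∉ R i → P.rk i (P.propose R i) ≤ P.rk i s := by
  have hne : (Finset.univ \ R i).Nonempty :=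
    ⟨P.nullSchool, by simp [h]⟩
  rw [propose, dif_pos hne]
  obtain ⟨hmem, hmin⟩ := (Finset.exists_min_image (Finset.univ \ R i) (P.rk i) hne).choose_spec
  refine ⟨by simpa using hmem, fun s hs => hmin s (by simp [hs])⟩

lemma propose_congr (R R' : I → Finset S) (i : I) (h : R i = R' i) :
    P.propose R i = P.propose R' i := by
  simp only [propose, h]

end SchoolChoice
namespace SchoolChoice
open scoped Classical
open Finset
set_option linter.unusedSectionVars false

variable {I S : Type} [Fintype I] [Fintype S] [DecidableEq I] [DecidableEq S]
variable (P : SchoolChoice I S)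

lemma daR_subset_succ (n : ℕ) (i : I) : P.daR n i ⊆ P.daR (n + 1) i :=
  Finset.subset_union_left

lemma daR_fix_of_fix {n : ℕ} (h : P.daR (n + 1) = P.daR n) :
    ∀ k, n ≤ k → P.daR k = P.daR n := by
  intro k hk
  induction k with
  | zero =>
    have : n = 0 := Nat.le_zero.mp hk
    subst this; rfl
  | succ k ih =>
    rcases Nat.lt_or_ge n (k+1) with h1 | h1
    · have hk' : n ≤ k := Nat.lt_succ_iff.mp h1
      have hkk : P.daR k = P.daR n := ih hk'
      show P.stepR (P.daR k) = P.daR n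
      rw [hkk]; exact h
    · have : n = k + 1 := le_antisymm hk h1
      subst this; rfl

lemma exists_strict (n : ℕ) (hne : P.daR (n+1) ≠ P.daR n) :
    ∃ i, P.daR n i ⊂ P.daR (n+1) i := by
  by_contra hc; push_neg at hc
  apply hne
  funext i
  have hsub := P.daR_subset_succ n i
  have : P.daR n i = P.daR (n+1) i := by
    by_contra hne2
    exact hc i (Finset.ssubset_iff_subset_ne.mpr ⟨hsub, hne2⟩)
  exact this.symm

lemma daR_fixpoint :
    P.stepR (P.daR (Fintype.card I * Fintype.card S + 1))
      = P.daR (Fintype.card I * Fintype.card S + 1) := by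
  set N := Fintype.card I * Fintype.card S
  have key : ∃ n ≤ N, P.daR (n + 1) = P.daR n := by
    by_contra hcon
    push_neg at hcon
    have grow : ∀ n, n ≤ N → n + 1 ≤ ∑ i : I, (P.daR (n+1) i).card := by
      intro n hn
      induction n with
      | zero =>
        obtain ⟨i, hi⟩ := P.exists_strict 0 (hcon 0 (Nat.zero_le _))
        have h0 : (P.daR 0 i).card = 0 := by simp [daR]
        have hlt := Finset.card_lt_card hi
        calc 0 + 1 ≤ (P.daR (0+1) i).card := by omega
          _ ≤ ∑ i : I, (P.daR (0+1) i).card :=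
            Finset.single_le_sum (f := fun i => (P.daR (0+1) i).card)
              (fun _ _ => Nat.zero_le _) (Finset.mem_univ i)
      | succ n ih =>
        obtain ⟨i, hi⟩ := P.exists_strict (n+1) (hcon (n+1) hn)
        have hlt : ∑ i : I, (P.daR (n+1) i).card < ∑ i : I, (P.daR (n+1+1) i).card :=
          Finset.sum_lt_sum (fun j _ => Finset.card_le_card (P.daR_subset_succ _ j))
            ⟨i, Finset.mem_univ i, Finset.card_lt_card hi⟩
        have := ih (Nat.le_of_succ_le hn)
        omega
    have hbound : ∑ i : I, (P.daR (N+1) i).card ≤ N := by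
      calc ∑ i : I, (P.daR (N+1) i).card ≤ ∑ _i : I, Fintype.card S :=
            Finset.sum_le_sum (fun j _ => by
              simpa using Finset.card_le_card (Finset.subset_univ (P.daR (N+1) j)))
        _ = N := by simp [Finset.sum_const, Finset.card_univ, N, mul_comm]
    have := grow N le_rfl
    omega
  obtain ⟨n, hn, hfix⟩ := key
  have h1 : P.daR (N + 1) = P.daR n := P.daR_fix_of_fix hfix _ (by omega)
  have h2 : P.daR (N + 1 + 1) = P.daR n := P.daR_fix_of_fix hfix _ (by omega)
  show P.daR (N + 1 + 1) = P.daR (N + 1)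
  rw [h1, h2]

end SchoolChoice
namespace SchoolChoice
open scoped Classical
open Finset
set_option linter.unusedSectionVars false

variable {I S : Type} [Fintype I] [Fintype S] [DecidableEq I] [DecidableEq S]
variable (P : SchoolChoice I S)

/-- number of students proposing to `s` at rejection state `R` -/
noncomputable def propTo (R : I → Finset S) (s : S) : Finset I :=
  Finset.univ.filter fun j => P.propose R j = s

lemma rejectsAt_iff (R : I → Finset S) (s : S) (i : I) (hi : P.propose R i = s) :
    P.rejectsAt R s i ↔
      P.quota s ≤ ((P.propTo R s).filter fun k => P.prio s k < P.prio s i).card := by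
  unfold rejectsAt propTo
  rw [Finset.filter_filter]
  simp [hi]

/-- at a fixpoint of `stepR`, nobody is rejected -/
lemma no_reject_of_fix (R : I → Finset S) (hfix : P.stepR R = R)
    (hnull : ∀ i, P.nullSchool ∉ R i) (s : S) (i : I) : ¬ P.rejectsAt R s i := by
  intro hrej
  have hmem : s ∈ P.stepR R i := by
    simp only [stepR, Finset.mem_union, Finset.mem_filter]
    exact Or.inr ⟨Finset.mem_univ _, hrej⟩
  rw [hfix] at hmem
  have := (P.propose_spec R i (hnull i)).1
  rw [hrej.1] at this
  exact this hmem

/-- if at least `quota s` students propose to `s`, that persists to the next round -/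
lemma full_persists (n : ℕ) (s : S)
    (h : P.quota s ≤ (P.propTo (P.daR n) s).card) :
    P.quota s ≤ (P.propTo (P.daR (n+1)) s).card := by
  set T := P.propTo (P.daR n) s with hT
  set H := T.filter fun j => (T.filter fun k => P.prio s k < P.prio s j).card < P.quota s
    with hH
  have hcard : H.card = P.quota s := by
    rw [hH, countLemma T (P.prio s) (P.prio_inj s) (P.quota s)]
    exact min_eq_left h
  have hsub : H ⊆ P.propTo (P.daR (n+1)) s := by
    intro j hj
    rw [hH, Finset.mem_filter] at hj
    obtain ⟨hjT, hjheld⟩ := hj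
    have hprop : P.propose (P.daR n) j = s := by
      rw [hT, propTo, Finset.mem_filter] at hjT; exact hjT.2
    have hnorej : ∀ s', ¬ P.rejectsAt (P.daR n) s' j := by
      intro s' hrej
      have hs' : s' = s := by rw [← hrej.1, hprop]
      subst hs'
      rw [P.rejectsAt_iff _ _ _ hprop, ← hT] at hrej
      omega
    have hsame : P.daR (n+1) j = P.daR n j := by
      show P.stepR (P.daR n) j = P.daR n j
      rw [stepR]
      have : (Finset.univ.filter fun s' => P.rejectsAt (P.daR n) s' j) = ∅ := by
        apply Finset.filter_false_of_mem
        intro s' _; exact hnorej s'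
      rw [this, Finset.union_empty]
    rw [propTo, Finset.mem_filter]
    exact ⟨Finset.mem_univ _, by rw [P.propose_congr _ _ _ hsame, hprop]⟩
  calc P.quota s = H.card := hcard.symm
    _ ≤ _ := Finset.card_le_card hsub

lemma full_mono (s : S) {m n : ℕ} (hmn : m ≤ n)
    (h : P.quota s ≤ (P.propTo (P.daR m) s).card) :
    P.quota s ≤ (P.propTo (P.daR n) s).card := by
  induction n with
  | zero => have : m = 0 := Nat.le_zero.mp hmn; exact this ▸ h
  | succ n ih =>
    rcases Nat.lt_or_ge m (n+1) with h1 | h1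
    · exact P.full_persists n s (ih (Nat.lt_succ_iff.mp h1))
    · have : m = n + 1 := le_antisymm hmn h1
      exact this ▸ h

lemma mem_daR_rejected {s : S} {i : I} {n : ℕ} (h : s ∈ P.daR n i) :
    ∃ m, m < n ∧ P.rejectsAt (P.daR m) s i := by
  induction n with
  | zero => simp [daR] at h
  | succ n ih =>
    simp only [daR, stepR, Finset.mem_union, Finset.mem_filter] at h
    rcases h with h | ⟨-, h⟩
    · obtain ⟨m, hm, hr⟩ := ih h
      exact ⟨m, Nat.lt_succ_of_lt hm, hr⟩
    · exact ⟨n, Nat.lt_succ_self n, h⟩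

/-- the DA fibers, as filters -/
lemma DA_fiber (s : S) :
    (Finset.univ.filter fun j => P.DA j = s)
      = P.propTo (P.daR (Fintype.card I * Fintype.card S + 1)) s := rfl

/-- DA is a matching -/
lemma isMatching_DA : P.IsMatching P.DA := by
  intro s
  rw [P.DA_fiber s]
  set R := P.daR (Fintype.card I * Fintype.card S + 1) with hR
  set T := P.propTo R s with hT
  have hall : T.filter (fun j => (T.filter fun k => P.prio s k < P.prio s j).card < P.quota s)
      = T := by
    apply Finset.filter_true_of_mem
    intro j hj
    have hprop : P.propose R j = s := by
      rw [hT, propTo, Finset.mem_filter] at hj; exact hj.2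
    have := P.no_reject_of_fix R (P.daR_fixpoint) (fun i => P.null_not_daR _ i) s j
    rw [P.rejectsAt_iff _ _ _ hprop, ← hT] at this
    omega
  have := countLemma T (P.prio s) (P.prio_inj s) (P.quota s)
  rw [hall] at this
  exact this.le.trans (Nat.min_le_left _ _)

/-- any school desired under DA is filled to at least its quota -/
lemma desired_full {i : I} {s : S} (h : P.Desires P.DA i s) :
    P.quota s ≤ (Finset.univ.filter fun j => P.DA j = s).card := by
  set N := Fintype.card I * Fintype.card S + 1 with hN
  have hnull := fun j => P.null_not_daR N j
  have hmem : s ∈ P.daR N i := by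
    by_contra hns
    have := (P.propose_spec (P.daR N) i (hnull i)).2 s hns
    exact absurd h (not_lt.mpr this)
  obtain ⟨m, hm, hrej⟩ := P.mem_daR_rejected hmem
  have h1 : P.quota s ≤ (P.propTo (P.daR m) s).card := by
    refine hrej.2.trans (Finset.card_le_card ?_)
    intro k hk
    rw [Finset.mem_filter] at hk
    rw [propTo, Finset.mem_filter]
    exact ⟨Finset.mem_univ _, hk.2.1⟩
  rw [P.DA_fiber s]
  exact P.full_mono s (le_of_lt hm) h1

end SchoolChoice
namespace SchoolChoice
open scoped Classical
open Finset
set_option linter.unusedSectionVars false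

variable {I S : Type} [Fintype I] [Fintype S] [DecidableEq I] [DecidableEq S]

lemma exists_injOn_finset (A B : Finset I) (h : A.card ≤ B.card) :
    ∃ f : I → I, (∀ a ∈ A, ∀ b ∈ A, f a = f b → a = b) ∧ ∀ j ∈ A, f j ∈ B := by
  let e := A.equivFin
  let e' := B.equivFin
  refine ⟨fun j => if hj : j ∈ A then (e'.symm (Fin.castLE h (e ⟨j, hj⟩))).1 else j, ?_, ?_⟩
  · intro a ha b hb hab
    simp only [dif_pos ha, dif_pos hb] at hab
    have h1 : e'.symm (Fin.castLE h (e ⟨a, ha⟩)) = e'.symm (Fin.castLE h (e ⟨b, hb⟩)) :=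
      Subtype.ext hab
    have h2 := e'.symm.injective h1
    have h3 := e.injective (Fin.castLE_injective h h2)
    exact Subtype.mk_eq_mk.mp h3
  · intro j hj
    simp only [dif_pos hj]
    exact (e'.symm _).2

variable (P : SchoolChoice I S)

lemma onCycle_of_not_unimprovable {i : I} (h : ¬ P.Unimprovable i) : P.OnCycle i := by
  rw [Unimprovable] at h
  push_neg at h
  obtain ⟨ν, ⟨hνm, hνrk⟩, hνi⟩ := h
  set M : Finset I := Finset.univ.filter fun j => ν j ≠ P.DA j with hMdef
  have hiM : i ∈ M := by simp [hMdef, hνi]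
  have hM : ∀ j ∈ M, P.rk j (ν j) < P.rk j (P.DA j) := by
    intro j hj
    rw [hMdef, Finset.mem_filter] at hj
    exact lt_of_le_of_ne (hνrk j) (fun he => hj.2 (P.rk_inj j he))
  set A : S → Finset I := fun s => Finset.univ.filter fun j => ν j = s ∧ P.DA j ≠ s with hA
  set B : S → Finset I := fun s => Finset.univ.filter fun j => P.DA j = s ∧ ν j ≠ s with hB
  have hAB : ∀ s, (A s).card ≤ (B s).card := by
    intro s
    rcases (A s).eq_empty_or_nonempty with he | ⟨j, hj⟩
    · simp [he]
    · rw [hA, Finset.mem_filter] at hj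
      obtain ⟨-, hjν, hjDA⟩ := hj
      have hdes : P.Desires P.DA j s := by
        have hjM : j ∈ M := by
          rw [hMdef, Finset.mem_filter]
          exact ⟨Finset.mem_univ _, fun he => hjDA (by rw [← he, hjν])⟩
        have := hM j hjM
        rw [hjν] at this
        exact this
      have hfull := P.desired_full hdes
      set X : Finset I := Finset.univ.filter fun j => ν j = s with hX
      set Y : Finset I := Finset.univ.filter fun j => P.DA j = s with hY
      have hXq : X.card ≤ P.quota s := hνm s
      have hAX : A s = X \ Y := by
        ext k; simp [hA, hX, hY, Finset.mem_sdiff, and_comm]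
      have hBY : B s = Y \ X := by
        ext k; simp [hB, hX, hY, Finset.mem_sdiff, and_comm]
      have e1 := Finset.card_sdiff_add_card_inter X Y
      have e2 := Finset.card_sdiff_add_card_inter Y X
      rw [Finset.inter_comm Y X] at e2
      rw [hAX, hBY]
      omega
  have hgex : ∀ s : S, ∃ f : I → I,
      (∀ a ∈ A s, ∀ b ∈ A s, f a = f b → a = b) ∧ ∀ j ∈ A s, f j ∈ B s :=
    fun s => exists_injOn_finset (A s) (B s) (hAB s)
  choose g hg1 hg2 using hgex
  set f : I → I := fun j => if j ∈ M then g (ν j) j else j with hf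
  have hmemA : ∀ j ∈ M, j ∈ A (ν j) := by
    intro j hj
    rw [hMdef, Finset.mem_filter] at hj
    simp [hA]
    exact fun he => hj.2 he.symm
  have hfB : ∀ j ∈ M, f j ∈ B (ν j) := by
    intro j hj
    rw [hf]; simp only [if_pos hj]
    exact hg2 (ν j) j (hmemA j hj)
  have hfDA : ∀ j ∈ M, P.DA (f j) = ν j := by
    intro j hj
    have := hfB j hj
    rw [hB, Finset.mem_filter] at this
    exact this.2.1
  have hfM : ∀ j ∈ M, f j ∈ M := by
    intro j hj
    have := hfB j hj
    rw [hB, Finset.mem_filter] at this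
    simp [hMdef]
    rw [this.2.1]
    exact fun he => this.2.2 he
  have hfInj : ∀ j ∈ M, ∀ k ∈ M, f j = f k → j = k := by
    intro j hj k hk he
    have hs : ν j = ν k := by
      rw [← hfDA j hj, ← hfDA k hk, he]
    have hejk : g (ν j) j = g (ν j) k := by
      rw [hf] at he; simp only [if_pos hj, if_pos hk] at he
      rw [he, hs]
    exact hg1 (ν j) j (hmemA j hj) k (hs ▸ hmemA k hk) hejk
  -- the orbit of i under f
  have hcM : ∀ k : ℕ, f^[k] i ∈ M := by
    intro k
    induction k with
    | zero => simpa using hiM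
    | succ k ih => rw [Function.iterate_succ_apply']; exact hfM _ ih
  have cancel : ∀ a : ℕ, ∀ x y : I, x ∈ M → y ∈ M → f^[a] x = f^[a] y → x = y := by
    intro a
    induction a with
    | zero => intro x y _ _ h; simpa using h
    | succ a ih =>
      intro x y hx hy h
      rw [Function.iterate_succ_apply, Function.iterate_succ_apply] at h
      exact hfInj x hx y hy (ih (f x) (f y) (hfM x hx) (hfM y hy) h)
  obtain ⟨a, b, hab, heq⟩ : ∃ a b : ℕ, a < b ∧ f^[a] i = f^[b] i := by
    obtain ⟨x, y, hxy, he⟩ := Fintype.exists_ne_map_eq_of_card_lt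
      (fun k : Fin (Fintype.card I + 1) => f^[(k : ℕ)] i) (by simp)
    rcases lt_or_gt_of_ne hxy with h1 | h1
    · exact ⟨x, y, h1, he⟩
    · exact ⟨y, x, h1, he.symm⟩
  have hmain : f^[b - a] i = i := by
    have h1 : f^[a + (b - a)] i = f^[a] i := by
      rw [Nat.add_sub_cancel' (le_of_lt hab)]
      exact heq.symm
    rw [Function.iterate_add_apply] at h1
    exact cancel a _ i (hcM _) hiM h1
  refine ⟨b - a, fun k => f^[k] i, by omega, by simp, hmain, ?_⟩
  intro k _
  have hkM := hcM k
  show P.Envy (f^[k] i) (f^[k + 1] i)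
  rw [Envy, Function.iterate_succ_apply', hfDA _ hkM]
  exact hM _ hkM

end SchoolChoice
namespace SchoolChoice
open scoped Classical
open Finset
set_option linter.unusedSectionVars false

variable {I S : Type} [Fintype I] [Fintype S] [DecidableEq I] [DecidableEq S]
variable (P : SchoolChoice I S)

lemma not_unimprovable_of_onCycle {i : I} (h : P.OnCycle i) : ¬ P.Unimprovable i := by
  -- take a cycle of minimal length through i
  set Q : ℕ → Prop := fun m => ∃ c : ℕ → I, 0 < m ∧ c 0 = i ∧ c m = i ∧
    ∀ k < m, P.Envy (c k) (c (k + 1)) with hQ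
  have hQex : ∃ m, Q m := by
    obtain ⟨m, c, h1, h2, h3, h4⟩ := h
    exact ⟨m, c, h1, h2, h3, h4⟩
  set m := Nat.find hQex with hmdef
  obtain ⟨c, hm, hc0, hcm, hedge⟩ := Nat.find_spec hQex
  have hmin : ∀ m' < m, ¬ Q m' := fun m' hm' => Nat.find_min hQex hm'
  -- the cycle is injective on [0, m)
  have hinj0 : ∀ a b, a < b → b < m → c a = c b → False := by
    intro a b hab hbm heq
    rcases Nat.eq_zero_or_pos a with ha0 | ha0
    · subst ha0
      apply hmin (m - b) (by omega)
      refine ⟨fun k => c (b + k), by omega, ?_, ?_, ?_⟩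
      · show c (b + 0) = i
        rw [Nat.add_zero, ← heq, hc0]
      · show c (b + (m - b)) = i
        have hbm : b + (m - b) = m := by omega
        rw [hbm, hcm]
      · intro k hk
        show P.Envy (c (b + k)) (c (b + (k + 1)))
        have h1 : b + k + 1 = b + (k + 1) := by omega
        have := hedge (b + k) (by omega)
        rw [h1] at this
        exact this
    · apply hmin (m - (b - a)) (by omega)
      refine ⟨fun k => if k ≤ a then c k else c (k + (b - a)), by omega, ?_, ?_, ?_⟩
      · show (if 0 ≤ a then c 0 else c (0 + (b - a))) = i
        rw [if_pos (Nat.zero_le a), hc0]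
      · show (if m - (b - a) ≤ a then c (m - (b - a))
            else c (m - (b - a) + (b - a))) = i
        have h1 : ¬ (m - (b - a) ≤ a) := by omega
        rw [if_neg h1]
        have h2 : m - (b - a) + (b - a) = m := by omega
        rw [h2, hcm]
      · intro k hk
        show P.Envy (if k ≤ a then c k else c (k + (b - a)))
          (if k + 1 ≤ a then c (k + 1) else c (k + 1 + (b - a)))
        rcases Nat.lt_or_ge k a with hk1 | hk1
        · have e1 : k ≤ a := le_of_lt hk1
          have e2 : k + 1 ≤ a := hk1
          rw [if_pos e1, if_pos e2]
          exact hedge k (by omega)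
        rcases Nat.eq_or_lt_of_le hk1 with hk2 | hk2
        · have e1 : k ≤ a := le_of_eq hk2.symm
          have e2 : ¬ (k + 1 ≤ a) := by omega
          rw [if_pos e1, if_neg e2]
          have e3 : k + 1 + (b - a) = b + 1 := by omega
          rw [e3, ← hk2, heq]
          exact hedge b (by omega)
        · have e1 : ¬ (k ≤ a) := by omega
          have e2 : ¬ (k + 1 ≤ a) := by omega
          rw [if_neg e1, if_neg e2]
          have e3 : k + 1 + (b - a) = k + (b - a) + 1 := by omega
          rw [e3]
          exact hedge (k + (b - a)) (by omega)
  have hinj : ∀ a b, a < m → b < m → c a = c b → a = b := by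
    intro a b ha hb heq
    rcases lt_trichotomy a b with h1 | h1 | h1
    · exact absurd heq (fun he => hinj0 a b h1 hb he)
    · exact h1
    · exact absurd heq.symm (fun he => hinj0 b a h1 ha he)
  -- the cyclic-trade permutation
  set σ : I → I := fun j =>
    if h : ∃ k, k < m ∧ c k = j then c ((Classical.choose h + 1) % m) else j with hσ
  have hσspec : ∀ k, k < m → σ (c k) = c ((k + 1) % m) := by
    intro k hk
    have hex : ∃ k', k' < m ∧ c k' = c k := ⟨k, hk, rfl⟩
    rw [hσ]
    simp only [dif_pos hex]
    obtain ⟨h1, h2⟩ := Classical.choose_spec hex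
    rw [hinj _ _ h1 hk h2]
  have hcmod : ∀ k, k < m → c ((k + 1) % m) = c (k + 1) := by
    intro k hk
    rcases Nat.lt_or_ge (k + 1) m with h1 | h1
    · rw [Nat.mod_eq_of_lt h1]
    · have : k + 1 = m := by omega
      rw [this, Nat.mod_self, hc0, hcm]
  have hσrk : ∀ k, k < m → P.rk (c k) (P.DA (σ (c k))) < P.rk (c k) (P.DA (c k)) := by
    intro k hk
    rw [hσspec k hk, hcmod k hk]
    exact hedge k hk
  have hσinj : Function.Injective σ := by
    intro x y hxy
    by_cases hx : ∃ k, k < m ∧ c k = x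
    · obtain ⟨kx, hkx, hcx⟩ := hx
      subst hcx
      rw [hσspec kx hkx] at hxy
      by_cases hy : ∃ k, k < m ∧ c k = y
      · obtain ⟨ky, hky, hcy⟩ := hy
        subst hcy
        rw [hσspec ky hky] at hxy
        have h1 : (kx + 1) % m = (ky + 1) % m :=
          hinj _ _ (Nat.mod_lt _ hm) (Nat.mod_lt _ hm) hxy
        have h2 : kx % m = ky % m := Nat.ModEq.add_right_cancel' 1 h1
        rw [Nat.mod_eq_of_lt hkx, Nat.mod_eq_of_lt hky] at h2
        rw [h2]
      · rw [hσ] at hxy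
        simp only [dif_neg hy] at hxy
        exact absurd ⟨_, Nat.mod_lt _ hm, hxy⟩ hy
    · by_cases hy : ∃ k, k < m ∧ c k = y
      · obtain ⟨ky, hky, hcy⟩ := hy
        subst hcy
        rw [hσspec ky hky] at hxy
        rw [hσ] at hxy
        simp only [dif_neg hx] at hxy
        exact absurd ⟨_, Nat.mod_lt _ hm, hxy.symm⟩ hx
      · rw [hσ] at hxy
        simp only [dif_neg hx, dif_neg hy] at hxy
        exact hxy
  have hσsurj : Function.Surjective σ := Finite.surjective_of_injective hσinj
  set ν : I → S := fun j => P.DA (σ j) with hν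
  have hνmatch : P.IsMatching ν := by
    intro s
    have hcard : (Finset.univ.filter fun j => ν j = s).card
        = (Finset.univ.filter fun j => P.DA j = s).card := by
      apply Finset.card_bij (fun j _ => σ j)
      · intro j hj
        rw [Finset.mem_filter] at hj ⊢
        exact ⟨Finset.mem_univ _, hj.2⟩
      · intro a _ b _ hab
        exact hσinj hab
      · intro k hk
        obtain ⟨j, rfl⟩ := hσsurj k
        rw [Finset.mem_filter] at hk
        exact ⟨j, Finset.mem_filter.mpr ⟨Finset.mem_univ _, hk.2⟩, rfl⟩
    rw [hcard]
    exact P.isMatching_DA s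
  have hνdom : ∀ j : I, P.rk j (ν j) ≤ P.rk j (P.DA j) := by
    intro j
    by_cases hj : ∃ k, k < m ∧ c k = j
    · obtain ⟨k, hk, rfl⟩ := hj
      exact le_of_lt (hσrk k hk)
    · rw [hν]
      simp only
      rw [hσ]
      simp only [dif_neg hj]
      exact le_rfl
  have hνi : ν i ≠ P.DA i := by
    have h1 : P.rk i (ν i) < P.rk i (P.DA i) := by
      show P.rk i (P.DA (σ i)) < P.rk i (P.DA i)
      have := hσrk 0 hm
      rw [hc0] at this
      exact this
    intro he
    rw [he] at h1
    exact lt_irrefl _ h1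
  intro hU
  exact hνi (hU ν ⟨hνmatch, hνdom⟩)

end SchoolChoice

/-- A student `i` is unimprovable if and only if `i` does not lie
on any directed cycle of the envy digraph `G^DA(P)`. -/
theorem unimprovable_iff_not_onCycle {I S : Type} [Fintype I] [Fintype S]
    [DecidableEq I] [DecidableEq S] (P : SchoolChoice I S) (i : I) :
    P.Unimprovable i ↔ ¬ P.OnCycle i := by
  constructor
  · intro hU hC
    exact P.not_unimprovable_of_onCycle hC hU
  · intro hC
    by_contra hU
    exact hC (P.onCycle_of_not_unimprovable hU)
end

section
/- Upper bound on Rawlsian inequality: let P be a school choice problem with n ≥ 2 ordinary schools (besides the null school), in which every student ranks every ordinary school above the null school and the total quota of ordinary schools is at least |I|. Then every stable-dominating matching ν satisfies 2 · max_{i∈I} rk_i(ν(i)) ≤ n · min_μ max_{i∈I} rk_i(μ(i)), where the minimum is over all matchings μ of P. -/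
/-!
A school that has rejected somebody holds at least its quota of applicants, and it keeps doing so
in every later round: its `quota` highest-priority applicants are never rejected. Every student
prefers each of the `n` ordinary schools to the null school, so a student sent to the null school
by DA was rejected by all of them, leaving them filled with the other `|I| - 1` students, which is
impossible when their seats number at least `|I|`. Hence DA, and with it every stable-dominating
matching, assigns every student a rank at most `n`; this gives the bound as soon as some matching
rank is at least `2`. Otherwise `μ` gives everyone her top choice, DA never rejects anybody, and
`ν` is at least as good as `μ` for everyone.
-/

theorem Finset.le_card_filter_card_filter_lt {α β : Type*} [LinearOrder β] (A : Finset α)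
    (p : α → β) {q : ℕ} (hq : q ≤ A.card) :
    q ≤ (A.filter fun j => (A.filter fun k => p k < p j).card < q).card := by
  have hsplit := Finset.card_filter_add_card_filter_not (s := A)
    fun j => (A.filter fun k => p k < p j).card < q
  by_contra! hlt
  set B := A.filter fun j => (A.filter fun k => p k < p j).card < q
  have hne : (A.filter fun j => ¬ (A.filter fun k => p k < p j).card < q).Nonempty := by
    rw [← Finset.card_pos]
    omega
  -- a `p`-minimal element outside `B` has all its predecessors in `B`, so it belongs to `B`
  obtain ⟨j, hj, hmin⟩ := Finset.exists_min_image _ p hne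
  have hbelow : (A.filter fun k => p k < p j) ⊆ B := fun k hk => by
    obtain ⟨hkA, hkj⟩ := Finset.mem_filter.1 hk
    by_contra hkB
    exact (hmin k (Finset.mem_filter.2 ⟨hkA, fun h => hkB (Finset.mem_filter.2 ⟨hkA, h⟩)⟩)).not_gt hkj
  exact (Finset.mem_filter.1 hj).2 ((Finset.card_le_card hbelow).trans_lt hlt)

namespace SchoolChoice

open Finset

variable {I S : Type} [Fintype I] [Fintype S] [DecidableEq I] [DecidableEq S]
  (P : SchoolChoice I S)

lemma one_le_rk (i : I) (s : S) : 1 ≤ P.rk i s := (mem_Icc.1 (P.rk_mem i s)).1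

lemma rk_le_card (i : I) (s : S) : P.rk i s ≤ Fintype.card S := (mem_Icc.1 (P.rk_mem i s)).2

noncomputable def applicants (R : I → Finset S) (s : S) : Finset I :=
  univ.filter fun j => P.propose R j = s

variable {P} {R R' : I → Finset S} {i : I} {s : S}

lemma mem_applicants : i ∈ P.applicants R s ↔ P.propose R i = s := by
  simp [applicants]

lemma propose_notMem (h : (univ \ R i).Nonempty) : P.propose R i ∉ R i := by
  rw [propose, dif_pos h]
  exact (mem_sdiff.1 (exists_min_image _ _ h).choose_spec.1).2

lemma rk_propose_le (hs : s ∉ R i) : P.rk i (P.propose R i) ≤ P.rk i s := by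
  have h : (univ \ R i).Nonempty := ⟨s, by simpa using hs⟩
  rw [propose, dif_pos h]
  exact (exists_min_image _ _ h).choose_spec.2 s (by simpa using hs)

lemma propose_eq_of_subset (hsub : R i ⊆ R' i) (hnot : P.propose R i ∉ R' i) :
    P.propose R' i = P.propose R i := by
  have hne : (univ \ R' i).Nonempty := ⟨_, mem_sdiff.2 ⟨mem_univ _, hnot⟩⟩
  exact P.rk_inj i <| le_antisymm (rk_propose_le hnot)
    (rk_propose_le fun h => propose_notMem hne (hsub h))

lemma propose_stepR_eq (hnull : P.nullSchool ∉ R i)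
    (hrej : ¬ P.rejectsAt R (P.propose R i) i) :
    P.propose (P.stepR R) i = P.propose R i := by
  have hne : (univ \ R i).Nonempty := ⟨_, mem_sdiff.2 ⟨mem_univ _, hnull⟩⟩
  exact propose_eq_of_subset subset_union_left (by simp [stepR, propose_notMem hne, hrej])

lemma quota_lt_card_applicants_of_rejectsAt (h : P.rejectsAt R s i) :
    P.quota s < (P.applicants R s).card := by
  have hsub : (univ.filter fun j => P.propose R j = s ∧ P.prio s j < P.prio s i)
      ⊂ P.applicants R s := by
    rw [← filter_filter]
    exact filter_ssubset.2 ⟨i, mem_applicants.2 h.1, lt_irrefl _⟩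
  exact h.2.trans_lt (card_lt_card hsub)

lemma not_rejectsAt_nullSchool : ¬ P.rejectsAt R P.nullSchool i := fun h =>
  (card_le_univ _).not_gt (P.quota_null ▸ quota_lt_card_applicants_of_rejectsAt h)

variable (P) in
lemma nullSchool_notMem_daR (m : ℕ) (i : I) : P.nullSchool ∉ P.daR m i := by
  induction m with
  | zero => simp [daR]
  | succ m ih => simp [daR, stepR, ih, not_rejectsAt_nullSchool]

lemma quota_le_card_applicants_stepR (hR : ∀ j, P.nullSchool ∉ R j)
    (hs : P.quota s ≤ (P.applicants R s).card) :
    P.quota s ≤ (P.applicants (P.stepR R) s).card := by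
  refine (le_card_filter_card_filter_lt _ (P.prio s) hs).trans (card_le_card fun j hj => ?_)
  obtain ⟨hjA, hj⟩ := mem_filter.1 hj
  have hprop : P.propose R j = s := mem_applicants.1 hjA
  have hrej : ¬ P.rejectsAt R s j := fun h => by
    rw [rejectsAt, ← filter_filter] at h
    exact h.2.not_gt hj
  rw [mem_applicants, propose_stepR_eq (hR j) (hprop ▸ hrej), hprop]

lemma quota_le_card_applicants_of_mem_daR {m : ℕ} (h : s ∈ P.daR m i) :
    P.quota s ≤ (P.applicants (P.daR m) s).card := by
  induction m with
  | zero => simp [daR] at h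
  | succ m ih =>
    apply quota_le_card_applicants_stepR (P.nullSchool_notMem_daR m)
    simp only [daR, stepR, mem_union, mem_filter, mem_univ, true_and] at h
    rcases h with h | h
    · exact ih h
    · exact (quota_lt_card_applicants_of_rejectsAt h).le

variable (P) in
lemma sum_card_applicants (R : I → Finset S) :
    ∑ s, (P.applicants R s).card = Fintype.card I :=
  (card_eq_sum_card_fiberwise fun _ _ => mem_coe.2 (mem_univ _)).symm

variable (P) in
theorem DA_ne_nullSchool
    (hlast : ∀ i s, s ≠ P.nullSchool → P.rk i s < P.rk i P.nullSchool)
    (hquota : Fintype.card I ≤ ∑ s ∈ univ.filter (fun s => s ≠ P.nullSchool), P.quota s)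
    (i : I) : P.DA i ≠ P.nullSchool := by
  intro hi
  set R := P.daR (Fintype.card I * Fintype.card S + 1)
  have hfilled : ∀ s ∈ univ.erase P.nullSchool, P.quota s ≤ (P.applicants R s).card :=
    fun s hs => quota_le_card_applicants_of_mem_daR (i := i) <| by
      by_contra h
      exact (hlast i s (ne_of_mem_erase hs)).not_ge (hi ▸ rk_propose_le h)
  have hnull : 0 < (P.applicants R P.nullSchool).card := card_pos.2 ⟨i, mem_applicants.2 hi⟩
  have hsum := add_sum_erase univ (fun s => (P.applicants R s).card) (mem_univ P.nullSchool)
  rw [sum_card_applicants] at hsum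
  rw [filter_ne'] at hquota
  have := sum_le_sum hfilled
  omega

lemma propose_empty_eq_of_rk_eq_one (h : P.rk i s = 1) :
    P.propose (fun _ => ∅) i = s :=
  P.rk_inj i <| le_antisymm (rk_propose_le (R := fun _ => ∅) (notMem_empty s))
    (h ▸ P.one_le_rk i _)

theorem DA_eq_propose_empty (h : P.IsMatching (P.propose fun _ => ∅)) :
    P.DA = P.propose fun _ => ∅ := by
  have hnorej : ∀ s i, ¬ P.rejectsAt (fun _ => ∅) s i := fun s i hrej =>
    (h s).not_gt (quota_lt_card_applicants_of_rejectsAt hrej)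
  have hdaR : ∀ m, P.daR m = fun _ => ∅ := by
    intro m
    induction m with
    | zero => rfl
    | succ m ih => funext i; simp [daR, stepR, ih, hnorej]
  exact congrArg P.propose (hdaR _)

theorem DA_eq_of_rk_eq_one {μ : I → S} (hμ : P.IsMatching μ) (h : ∀ i, P.rk i (μ i) = 1) :
    P.DA = μ := by
  have hμ_eq : (P.propose fun _ => ∅) = μ := funext fun i => propose_empty_eq_of_rk_eq_one (h i)
  rw [DA_eq_propose_empty (hμ_eq ▸ hμ), hμ_eq]

end SchoolChoice

/-- Upper bound on Rawlsian inequality.  In a school choice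
problem with `n ≥ 2` ordinary schools besides the null school, where every
student ranks every ordinary school above the null school and the ordinary
schools' total quota is at least `|I|`, every stable-dominating matching `ν`
satisfies `2 · max_i rk_i(ν i) ≤ n · max_i rk_i(μ i)` for every matching `μ`
(i.e. `2 · max rk(ν) ≤ n · min_μ max rk(μ)`). -/
theorem rawlsian_upper_bound {I S : Type} [Fintype I] [Fintype S]
    [DecidableEq I] [DecidableEq S] (P : SchoolChoice I S) (n : ℕ) (hn : 2 ≤ n)
    (hcard : Fintype.card S = n + 1)
    (hrk : ∀ i : I, P.rk i P.nullSchool = n + 1)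
    (hquota : Fintype.card I
      ≤ ∑ s ∈ Finset.univ.filter (fun s => s ≠ P.nullSchool), P.quota s)
    (ν : I → S) (hν : P.StableDominating ν)
    (μ : I → S) (hμ : P.IsMatching μ) :
    2 * (Finset.univ.sup fun i : I => P.rk i (ν i))
      ≤ n * (Finset.univ.sup fun i : I => P.rk i (μ i)) := by
  have hlast : ∀ i s, s ≠ P.nullSchool → P.rk i s < P.rk i P.nullSchool := fun i s hs =>
    (hrk i ▸ hcard ▸ P.rk_le_card i s).lt_of_ne fun h => hs (P.rk_inj i h)
  have hDA : ∀ i, P.rk i (P.DA i) ≤ n := fun i =>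
    Nat.lt_succ_iff.1 ((hlast i _ (P.DA_ne_nullSchool hlast hquota i)).trans_eq (hrk i))
  by_cases htop : ∀ i, P.rk i (μ i) = 1
  · have hνμ : (Finset.univ.sup fun i => P.rk i (ν i)) ≤ Finset.univ.sup fun i => P.rk i (μ i) :=
      Finset.sup_mono_fun fun i _ => (hν.2 i).trans_eq (by rw [P.DA_eq_of_rk_eq_one hμ htop])
    calc 2 * _ ≤ 2 * _ := Nat.mul_le_mul_left 2 hνμ
      _ ≤ n * _ := Nat.mul_le_mul_right _ hn
  · obtain ⟨i, hi⟩ := not_forall.1 htop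
    have hμ2 : 2 ≤ Finset.univ.sup fun i => P.rk i (μ i) :=
      Finset.le_sup_of_le (Finset.mem_univ i) (by have := P.one_le_rk i (μ i); omega)
    have hνn : (Finset.univ.sup fun i => P.rk i (ν i)) ≤ n :=
      Finset.sup_le fun i _ => (hν.2 i).trans (hDA i)
    calc 2 * _ ≤ 2 * n := Nat.mul_le_mul_left 2 hνn
      _ = n * 2 := mul_comm _ _
      _ ≤ n * _ := Nat.mul_le_mul_left n hμ2
end
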